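/- Pure-punishment risk-dominance threshold: assume T > R > P > S, ε ≥ 0, α = 0, and u > (T + P − R − S)/2. Then, under the punishment payoff matrix Π_P, the strategy ACD is risk-dominant against every one of the six strategies ADC, ADD, NCC, NCD, NDC, NDD if and only if ε < 2·min{T − S, R − P}. -/

import Mathlib

/-- A strategy in the commitment game: whether to accept a prior commitment
(`commit = true` means "A"), the action if a commitment is formed
(`inAct = true` means "C"), and the action if no commitment is formed
(`outAct = true` means "C"). -/
structure Strat where
  commit : Bool
  inAct : Bool
  outAct : Bool
deriving DecidableEq

def ACC : Strat := ⟨true, true, true⟩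
def ACD : Strat := ⟨true, true, false⟩
def ADC : Strat := ⟨true, false, true⟩
def ADD : Strat := ⟨true, false, false⟩
def NCC : Strat := ⟨false, true, true⟩
def NCD : Strat := ⟨false, true, false⟩
def NDC : Strat := ⟨false, false, true⟩
def NDD : Strat := ⟨false, false, false⟩

/-- Row player's payoff in the one-shot Prisoner's Dilemma with payoffs
`T, R, P, S`; `true` codes cooperation. -/
def pd (T R P S : ℝ) (myC otherC : Bool) : ℝ :=
  if myC then (if otherC then R else S) else (if otherC then T else P)

/-- The reward payoff matrix `Π_R`: the row player receives its PD payoff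
(commitment formed iff both commit; then each pays `ε/2` and plays its
in-commitment action, otherwise both play their no-commitment actions),
plus `α·u` if it accepted the commitment, plus an additional `(1−α)·u`
if a commitment is formed and it cooperates in it. -/
noncomputable def payR (T R P S ε u α : ℝ) (s t : Strat) : ℝ :=
  (if s.commit ∧ t.commit then
      pd T R P S s.inAct t.inAct - ε / 2 + (if s.inAct then (1 - α) * u else 0)
   else pd T R P S s.outAct t.outAct)
  + (if s.commit then α * u else 0)

/-- The punishment payoff matrix `Π_P`: as `Π_R` except that instead of the
reward `(1−α)·u` for compliance, the amount `(1−α)·u` is subtracted when a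
commitment is formed and the row player defects in it. -/
noncomputable def payP (T R P S ε u α : ℝ) (s t : Strat) : ℝ :=
  (if s.commit ∧ t.commit then
      pd T R P S s.inAct t.inAct - ε / 2 - (if s.inAct then 0 else (1 - α) * u)
   else pd T R P S s.outAct t.outAct)
  + (if s.commit then α * u else 0)

/-- Flip the participation decision of a strategy (A ↔ N). -/
def flipPart (s : Strat) : Strat := ⟨!s.commit, s.inAct, s.outAct⟩

/-- The noisy payoff matrix `Π̃`: with probability `χ` each player independently
errs in its decision whether to join the commitment. -/
noncomputable def noisy (χ : ℝ) (M : Strat → Strat → ℝ) (s t : Strat) : ℝ :=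
  (1 - χ) ^ 2 * M s t + χ * (1 - χ) * (M (flipPart s) t + M s (flipPart t))
    + χ ^ 2 * M (flipPart s) (flipPart t)

/-- Strategy `a` is risk-dominant against strategy `b` under payoff matrix `Π`. -/
def RiskDom (M : Strat → Strat → ℝ) (a b : Strat) : Prop :=
  M a a + M a b > M b a + M b b

/-- `x` is an evolutionarily stable strategy (ESS) of the payoff matrix `Π`. -/
def IsESS (M : Strat → Strat → ℝ) (x : Strat) : Prop :=
  ∀ y : Strat, y ≠ x → M x x > M y x ∨ (M x x = M y x ∧ M x y > M y y)

/-!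
Against a strategy that commits and then defects (ADC, ADD) a commitment forms on both sides, so
the entry costs `ε / 2` and participation rewards cancel and ACD wins exactly when the sanction
`u` on the defector outweighs `(T + P - R - S) / 2`. Against a non-committer (NCC, NCD, NDC, NDD)
no commitment forms and ACD defects, so only ACD pays `ε / 2`, and it wins iff `ε / 2 < T - S`
(the opponent cooperates when uncommitted) or `ε / 2 < R - P` (the opponent defects).
-/

section RiskDomACD

variable {T R P S ε u α : ℝ} {B : Strat}

theorem riskDom_payP_ACD_of_commit_of_inAct_eq_false (hc : B.commit = true)
    (hi : B.inAct = false) :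
    RiskDom (payP T R P S ε u α) ACD B ↔ T + P - R - S < 2 * (1 - α) * u := by
  obtain ⟨c, i, o⟩ := B
  subst hc hi
  simp only [RiskDom, payP, pd, ACD]
  constructor <;> intro h <;> norm_num at h ⊢ <;> linarith

theorem riskDom_payP_ACD_of_commit_eq_false_of_outAct (hc : B.commit = false)
    (ho : B.outAct = true) :
    RiskDom (payP T R P S ε u α) ACD B ↔ ε < 2 * (T - S) + 4 * α * u := by
  obtain ⟨c, i, o⟩ := B
  subst hc ho
  simp only [RiskDom, payP, pd, ACD]
  constructor <;> intro h <;> norm_num at h ⊢ <;> linarith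

theorem riskDom_payP_ACD_of_commit_eq_false_of_outAct_eq_false (hc : B.commit = false)
    (ho : B.outAct = false) :
    RiskDom (payP T R P S ε u α) ACD B ↔ ε < 2 * (R - P) + 4 * α * u := by
  obtain ⟨c, i, o⟩ := B
  subst hc ho
  simp only [RiskDom, payP, pd, ACD]
  constructor <;> intro h <;> norm_num at h ⊢ <;> linarith

end RiskDomACD

theorem pure_punishment_threshold_general (T R P S ε u : ℝ)
    (hu : u > (T + P - R - S) / 2) :
    (∀ B ∈ ({ADC, ADD, NCC, NCD, NDC, NDD} : Set Strat),
        RiskDom (payP T R P S ε u 0) ACD B)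
      ↔ ε < 2 * min (T - S) (R - P) := by
  have hsanction : T + P - R - S < 2 * (1 - 0) * u := by linarith
  simp only [Set.forall_mem_insert, Set.mem_singleton_iff, forall_eq]
  rw [riskDom_payP_ACD_of_commit_of_inAct_eq_false rfl rfl,
    riskDom_payP_ACD_of_commit_of_inAct_eq_false rfl rfl,
    riskDom_payP_ACD_of_commit_eq_false_of_outAct rfl rfl,
    riskDom_payP_ACD_of_commit_eq_false_of_outAct_eq_false rfl rfl,
    riskDom_payP_ACD_of_commit_eq_false_of_outAct rfl rfl,
    riskDom_payP_ACD_of_commit_eq_false_of_outAct_eq_false rfl rfl,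
    mul_min_of_nonneg _ _ zero_le_two, lt_min_iff]
  simp only [hsanction, mul_zero, zero_mul, add_zero, true_and]
  tauto

/-- **Pure-punishment risk-dominance threshold.**
Assume `T > R > P > S`, `ε ≥ 0`, `α = 0`, and `u > (T + P − R − S)/2`. Under the
punishment matrix `Π_P`, ACD is risk-dominant against each of ADC, ADD, NCC, NCD,
NDC, NDD iff `ε < 2·min{T − S, R − P}`. -/
theorem pure_punishment_threshold (T R P S ε u : ℝ)
    (hTR : T > R) (hRP : R > P) (hPS : P > S) (hε : 0 ≤ ε)
    (hu : u > (T + P - R - S) / 2) :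
    (∀ B ∈ ({ADC, ADD, NCC, NCD, NDC, NDD} : Set Strat),
        RiskDom (payP T R P S ε u 0) ACD B)
      ↔ ε < 2 * min (T - S) (R - P) :=
  pure_punishment_threshold_general T R P S ε u hu
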